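/- The set K = {1, b, c, d} of homeomorphisms of C(1) is closed under composition and inverses and forms a subgroup of the homeomorphism group of C(1) isomorphic to the Klein four-group; explicitly, b∘c = c∘b = d, c∘d = d∘c = b, d∘b = b∘d = c, the elements b, c, d are pairwise distinct involutions, and none equals the identity. -/

import Mathlib

/-! Basic setup: the Cantor set `Δ = ℕ → Bool` and `C n = Fin n × Δ`,
the disjoint union of `n` copies of the Cantor set. -/

abbrev Δ : Type := ℕ → Bool
abbrev C (n : ℕ) : Type := Fin n × Δ

/-- A bijection between discrete spaces, as a homeomorphism. -/
def discHomeo {X Y : Type*} [TopologicalSpace X] [TopologicalSpace Y]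
    [DiscreteTopology X] [DiscreteTopology Y] (e : X ≃ Y) : X ≃ₜ Y :=
  ⟨e, continuous_of_discreteTopology, continuous_of_discreteTopology⟩

/-- The permutation homeomorphism `p_α : C n ≃ₜ C n`, permuting the copies
of the Cantor set according to `α`. -/
def permC {n : ℕ} (α : Equiv.Perm (Fin n)) : C n ≃ₜ C n :=
  (discHomeo α).prodCongr (Homeomorph.refl Δ)

/-- Cast between `C m` and `C n` when `m = n`. -/
def castC {m n : ℕ} (h : m = n) : C m ≃ₜ C n :=
  (discHomeo (finCongr h)).prodCongr (Homeomorph.refl Δ)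

/-- `C (m + n)` is the disjoint union of `C m` and `C n` (first `m` copies,
then the remaining `n` copies). -/
def toSum (m n : ℕ) : C (m + n) ≃ₜ (C m) ⊕ (C n) :=
  ((discHomeo finSumFinEquiv.symm).prodCongr (Homeomorph.refl Δ)).trans
    (Homeomorph.sumProdDistrib)

/-- The direct sum `f ⊕ g` of homeomorphisms, acting as `f` on the first `m`
copies (sent to the first `m'` copies) and as `g` on the last `n` copies. -/
def dsum {m m' n n' : ℕ} (f : C m ≃ₜ C m') (g : C n ≃ₜ C n') :
    C (m + n) ≃ₜ C (m' + n') :=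
  ((toSum m n).trans (f.sumCongr g)).trans (toSum m' n').symm

/-- The split homeomorphism `x : C 1 ≃ₜ C 2`: a sequence starting with letter
`i` is sent to the `(i+1)`-st copy of the Cantor set, deleting the first letter. -/
def split : C 1 ≃ₜ C 2 where
  toFun p := (finTwoEquiv.symm (p.2 0), fun k => p.2 (k + 1))
  invFun p := (0, fun k => Nat.casesOn k (finTwoEquiv p.1) (fun j => p.2 j))
  left_inv := by
    rintro ⟨i, w⟩
    refine Prod.ext (Subsingleton.elim _ _) ?_
    funext k
    cases k <;> simp
  right_inv := by
    rintro ⟨i, w⟩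
    refine Prod.ext ?_ rfl
    simp
  continuous_toFun := by
    refine Continuous.prodMk ?_ ?_
    · exact Continuous.comp continuous_of_discreteTopology
        ((continuous_apply 0).comp continuous_snd)
    · exact continuous_pi fun k => (continuous_apply (k + 1)).comp continuous_snd
  continuous_invFun := by
    refine Continuous.prodMk continuous_const ?_
    refine continuous_pi fun k => ?_
    cases k with
    | zero => exact Continuous.comp continuous_of_discreteTopology continuous_fst
    | succ j => exact (continuous_apply j).comp continuous_snd

/-- The split homeomorphism `x_i^{(n)} = id_{i-1} ⊕ x ⊕ id_{n-i} : C n ≃ₜ C (n+1)`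
(with `i` zero-indexed, so `i : Fin n` splits the `(i+1)`-st copy). -/
def splitAt {n : ℕ} (i : Fin n) : C n ≃ₜ C (n + 1) :=
  ((castC (show n = (i : ℕ) + 1 + (n - 1 - i) by have := i.isLt; omega)).trans
    (dsum (dsum (Homeomorph.refl (C i)) split) (Homeomorph.refl (C (n - 1 - i))))).trans
    (castC (show (i : ℕ) + 2 + (n - 1 - i) = n + 1 by have := i.isLt; omega))

/-- `IsForest f` says that `f : C m ≃ₜ C n` is a binary forest, i.e. a
(possibly empty) composition of split homeomorphisms.  A binary tree is a
binary forest with domain `C 1`. -/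
inductive IsForest : ∀ {m n : ℕ}, (C m ≃ₜ C n) → Prop where
  | refl (m : ℕ) : IsForest (Homeomorph.refl (C m))
  | step {m n : ℕ} {f : C m ≃ₜ C n} (i : Fin n) (hf : IsForest f) :
      IsForest (f.trans (splitAt i))

/-! The Grigorchuk generators `σ, b, c, d`, defined via the Grigorchuk automaton:
on binary sequences, `σ` flips the first letter, and `b(0w)=0σ(w)`, `b(1w)=1c(w)`,
`c(0w)=0σ(w)`, `c(1w)=1d(w)`, `d(0w)=0w`, `d(1w)=1b(w)`. -/

/-- States of the Grigorchuk automaton: the identity, `σ`, `b`, `c`, `d`. -/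
inductive GS : Type | e | s | b | c | d
deriving DecidableEq

instance instFintypeGS : Fintype GS :=
  ⟨{.e, .s, .b, .c, .d}, fun x => by cases x <;> decide⟩

instance : TopologicalSpace GS := ⊥
instance : DiscreteTopology GS := ⟨rfl⟩

/-- Output function of the Grigorchuk automaton. -/
def GS.out : GS → Bool → Bool
  | .s, i => !i
  | _,  i => i

/-- Transition function of the Grigorchuk automaton. -/
def GS.step : GS → Bool → GS
  | .e, _ => .e
  | .s, _ => .e
  | .b, false => .s
  | .b, true  => .c
  | .c, false => .s
  | .c, true  => .d
  | .d, false => .e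
  | .d, true  => .b

/-- The state of the automaton started in state `g` after reading `w 0, …, w (n-1)`. -/
def GS.stArr (g : GS) (w : Δ) : ℕ → GS
  | 0 => g
  | n + 1 => (GS.stArr g w n).step (w n)

/-- The action of the automaton state `g` on infinite binary sequences. -/
def GS.act (g : GS) (w : Δ) : Δ := fun n => (GS.stArr g w n).out (w n)

lemma GS.out_out : ∀ (g : GS) (i : Bool), g.out (g.out i) = i := by decide

lemma GS.step_out : ∀ (g : GS) (i : Bool), g.step (g.out i) = g.step i := by decide

lemma GS.stArr_act (g : GS) (w : Δ) : ∀ n, GS.stArr g (GS.act g w) n = GS.stArr g w n := by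
  intro n
  induction n with
  | zero => rfl
  | succ n ih => rw [GS.stArr, GS.stArr, ih, GS.act, GS.step_out]

lemma GS.act_act (g : GS) (w : Δ) : GS.act g (GS.act g w) = w := by
  funext n
  rw [GS.act, GS.stArr_act, GS.act, GS.out_out]

lemma GS.continuous_stArr (g : GS) (n : ℕ) : Continuous (fun w : Δ => GS.stArr g w n) := by
  induction n with
  | zero => exact continuous_const
  | succ n ih =>
      exact Continuous.comp (f := fun w : Δ => ((GS.stArr g w n), w n))
        (g := fun p : GS × Bool => p.1.step p.2)
        continuous_of_discreteTopology (ih.prodMk (continuous_apply n))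

lemma GS.continuous_act (g : GS) : Continuous (GS.act g) := by
  refine continuous_pi fun n => ?_
  exact Continuous.comp (f := fun w : Δ => ((GS.stArr g w n), w n))
    (g := fun p : GS × Bool => p.1.out p.2)
    continuous_of_discreteTopology ((GS.continuous_stArr g n).prodMk (continuous_apply n))

/-- The homeomorphism of the Cantor set determined by an automaton state. -/
def GS.homeo (g : GS) : Δ ≃ₜ Δ where
  toFun := GS.act g
  invFun := GS.act g
  left_inv := GS.act_act g
  right_inv := GS.act_act g
  continuous_toFun := GS.continuous_act g
  continuous_invFun := GS.continuous_act g

/-- Lift a homeomorphism of the Cantor set to `C 1`. -/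
def liftC1 (h : Δ ≃ₜ Δ) : C 1 ≃ₜ C 1 := (Homeomorph.refl (Fin 1)).prodCongr h

/-- The Grigorchuk generator `σ` (flips the first letter). -/
def gσ : C 1 ≃ₜ C 1 := liftC1 (GS.homeo .s)
/-- The Grigorchuk generator `b`. -/
def gb : C 1 ≃ₜ C 1 := liftC1 (GS.homeo .b)
/-- The Grigorchuk generator `c`. -/
def gc : C 1 ≃ₜ C 1 := liftC1 (GS.homeo .c)
/-- The Grigorchuk generator `d`. -/
def gd : C 1 ≃ₜ C 1 := liftC1 (GS.homeo .d)

/-- The group of self-homeomorphisms of `C n`, with `(f * g) x = f (g x)`. -/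
instance homeoGroup (n : ℕ) : Group (C n ≃ₜ C n) where
  mul f g := g.trans f
  one := Homeomorph.refl _
  inv := Homeomorph.symm
  mul_assoc a b c := rfl
  one_mul a := rfl
  mul_one a := rfl
  inv_mul_cancel a := Homeomorph.self_trans_symm a

/-- The first Grigorchuk group `𝒢 = ⟨σ, b, c, d⟩`. -/
def Grig : Subgroup (C 1 ≃ₜ C 1) :=
  Subgroup.closure {gσ, gb, gc, gd}

/-- The set `K = {1, b, c, d}` of homeomorphisms of `C 1`. -/
def Kset : Set (C 1 ≃ₜ C 1) := {Homeomorph.refl (C 1), gb, gc, gd}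

/-- The `n`-fold direct sum `k₁ ⊕ ⋯ ⊕ k_n` of homeomorphisms of `C 1`. -/
def dsumFam : {n : ℕ} → (Fin n → (C 1 ≃ₜ C 1)) → (C n ≃ₜ C n)
  | 0, _ => Homeomorph.refl _
  | n + 1, k => dsum (dsumFam (fun i : Fin n => k i.castSucc)) (k (Fin.last n))

/-- The direct sum `h₁ ⊕ ⋯ ⊕ h_n` of a family of homeomorphisms
`h i : C 1 ≃ₜ C (m i)`. -/
def dsumFamH : {n : ℕ} → {m : Fin n → ℕ} → (∀ i, C 1 ≃ₜ C (m i)) →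
    (C n ≃ₜ C (∑ i, m i))
  | 0, _, _ => castC (by simp)
  | n + 1, m, h =>
      (dsum (dsumFamH (fun i : Fin n => h i.castSucc)) (h (Fin.last n))).trans
        (castC (Fin.sum_univ_castSucc m).symm)

/-- The group `K_n = {p_α ∘ (k₁ ⊕ ⋯ ⊕ k_n) : α ∈ S_n, kᵢ ∈ K}`. -/
def Kn (n : ℕ) : Set (C n ≃ₜ C n) :=
  {h | ∃ (α : Equiv.Perm (Fin n)) (k : Fin n → (C 1 ≃ₜ C 1)),
    (∀ i, k i ∈ Kset) ∧ h = (dsumFam k).trans (permC α)}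

/-- `σ_j : C m ≃ₜ C m`, acting as `σ` on the `(j+1)`-st copy (zero-indexed `j`)
of the Cantor set and as the identity elsewhere. -/
def sigmaAt {m : ℕ} (j : Fin m) : C m ≃ₜ C m :=
  dsumFam (fun i => if i = j then gσ else Homeomorph.refl (C 1))

/-- Membership in the groupoid `𝔙` generated by all split homeomorphisms and
all permutation homeomorphisms. -/
inductive InV : ∀ {m n : ℕ}, (C m ≃ₜ C n) → Prop where
  | split {n : ℕ} (i : Fin n) : InV (splitAt i)
  | perm {n : ℕ} (α : Equiv.Perm (Fin n)) : InV (permC α)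
  | comp {m n p : ℕ} {f : C m ≃ₜ C n} {g : C n ≃ₜ C p} :
      InV f → InV g → InV (f.trans g)
  | inv {m n : ℕ} {f : C m ≃ₜ C n} : InV f → InV f.symm

/-- Membership in Röver's groupoid `𝔙𝒢`, generated by `𝔙` together with the
elements of the Grigorchuk group `𝒢`. -/
inductive InVG : ∀ {m n : ℕ}, (C m ≃ₜ C n) → Prop where
  | split {n : ℕ} (i : Fin n) : InVG (splitAt i)
  | perm {n : ℕ} (α : Equiv.Perm (Fin n)) : InVG (permC α)
  | grig {g : C 1 ≃ₜ C 1} : g ∈ Grig → InVG g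
  | comp {m n p : ℕ} {f : C m ≃ₜ C n} {g : C n ≃ₜ C p} :
      InVG f → InVG g → InVG (f.trans g)
  | inv {m n : ℕ} {f : C m ≃ₜ C n} : InVG f → InVG f.symm

/-- The coset `[f] = K_n f = {k ∘ f : k ∈ K_n}` of `f : C 1 ≃ₜ C n`. -/
def coset {n : ℕ} (f : C 1 ≃ₜ C n) : Set (C 1 ≃ₜ C n) :=
  {h | ∃ k ∈ Kn n, h = f.trans k}

/-- The ambient type for vertices of the poset `𝒫`: a rank `n` together with
a set of homeomorphisms `C 1 ≃ₜ C n`. -/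
def PP : Type := Σ n : ℕ, Set (C 1 ≃ₜ C n)

/-- A member of `PP` is a vertex of `𝒫` if it is the coset `[f] = K_n f` of
some `f : C 1 ≃ₜ C n` in Röver's groupoid. -/
def IsVert (v : PP) : Prop :=
  ∃ f : C 1 ≃ₜ C v.1, InVG f ∧ v.2 = coset f

/-- `w` is a splitting of `v` if `v = [f]` and `w = [x_i ∘ f]` for some
representative `f` and some index `i`. -/
def SplittingOf (v w : PP) : Prop :=
  ∃ (n : ℕ) (f : C 1 ≃ₜ C n) (i : Fin n), InVG f ∧
    v = ⟨n, coset f⟩ ∧ w = ⟨n + 1, coset (f.trans (splitAt i))⟩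

/-- `w` is an expansion of `v` (written `v ≤ w`): `w` is obtained from `v` by
a finite (possibly empty) sequence of splittings. -/
def Expansion : PP → PP → Prop := Relation.ReflTransGen SplittingOf

/-- The four possible elementary pieces `1, x, σ₁ ∘ x, x₁ ∘ x` (with their
ranks), used to define elementary expansions. -/
def elemSet : Set (Σ m : ℕ, (C 1 ≃ₜ C m)) :=
  {⟨1, Homeomorph.refl (C 1)⟩, ⟨2, split⟩,
   ⟨2, split.trans (sigmaAt (0 : Fin 2))⟩,
   ⟨3, split.trans (splitAt (0 : Fin 2))⟩}

/-- `w` is an elementary expansion of `v`: `v = [f]` and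
`w = [(u₁ ⊕ ⋯ ⊕ u_n) ∘ f]` where each `uᵢ ∈ {1, x, σ₁∘x, x₁∘x}`. -/
def ElemExp (v w : PP) : Prop :=
  ∃ (n : ℕ) (f : C 1 ≃ₜ C n) (m : Fin n → ℕ) (h : ∀ i, C 1 ≃ₜ C (m i)),
    InVG f ∧ (∀ i, (⟨m i, h i⟩ : Σ m : ℕ, (C 1 ≃ₜ C m)) ∈ elemSet) ∧
    v = ⟨n, coset f⟩ ∧ w = ⟨∑ i, m i, coset (f.trans (dsumFamH h))⟩


/-!
The generators are states of a finite automaton, and every state acts as an involution. For the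
products, take a finite set of triples `(g, g₁, g₂)` of states such that `g₁ ∘ g₂` and `g` write
the same first letter and such that the set is closed under passing to the states reached after
reading a letter; by induction on the position, `g₁ ∘ g₂` and `g` then agree on every letter.
One letter of the image of a suitable sequence shows `b, c, d ≠ 1`, and then the relations force
`b, c, d` to be distinct. A four-element set of involutions closed under multiplication is a
Klein four-subgroup.
-/

theorem IsKleinFour.of_card_eq_four_of_mul_self {G : Type*} [Group G] (hcard : Nat.card G = 4)
    (hG : ∀ g : G, g * g = 1) : IsKleinFour G where
  card_four := hcard
  exponent_two := by
    have : Finite G := Nat.finite_of_card_ne_zero (by omega)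
    have : Nontrivial G := Finite.one_lt_card_iff_nontrivial.mp (by omega)
    exact (Monoid.exponent_eq_prime_iff Nat.prime_two).mpr fun g hg =>
      orderOf_eq_prime (by rw [sq, hG]) hg

theorem Subgroup.exists_coe_eq_isKleinFour_of_mul_self {G : Type*} [Group G] {S : Set G}
    (one_mem : 1 ∈ S) (mul_mem : ∀ {a b}, a ∈ S → b ∈ S → a * b ∈ S)
    (mul_self : ∀ {a}, a ∈ S → a * a = 1) (hS : S.ncard = 4) : ∃ H : Subgroup G, (H : Set G) = S ∧ IsKleinFour H := by
  let H : Subgroup G :=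
    { carrier := S
      one_mem' := one_mem
      mul_mem' := mul_mem
      inv_mem' := fun {a} ha => by rwa [inv_eq_of_mul_eq_one_right (mul_self ha)] }
  refine ⟨H, rfl, IsKleinFour.of_card_eq_four_of_mul_self ?_ fun g => Subtype.ext ?_⟩
  · exact (Nat.card_coe_set_eq S).trans hS
  · exact mul_self g.2

namespace GS

theorem act_act_eq_act_of_closed (R : GS → GS → GS → Prop)
    (hout : ∀ g g₁ g₂, R g g₁ g₂ → ∀ i, g₁.out (g₂.out i) = g.out i)
    (hstep : ∀ g g₁ g₂, R g g₁ g₂ → ∀ i, R (g.step i) (g₁.step (g₂.out i)) (g₂.step i))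
    {g g₁ g₂ : GS} (h : R g g₁ g₂) (w : Δ) : act g₁ (act g₂ w) = act g w := by
  have hR : ∀ n, R (stArr g w n) (stArr g₁ (act g₂ w) n) (stArr g₂ w n) := by
    intro n
    induction n with
    | zero => exact h
    | succ n ih => exact hstep _ _ _ ih (w n)
  funext n
  exact hout _ _ _ (hR n) (w n)

/-- Triples `(g, g₁, g₂)` of states with `g₁ ∘ g₂ = g`; the last four are only there to make
the list closed under passing to sections. -/
def productTriples : List (GS × GS × GS) :=
  [(d, b, c), (d, c, b), (b, c, d), (b, d, c), (c, d, b), (c, b, d),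
    (e, s, s), (e, e, e), (s, e, s), (s, s, e)]

theorem homeo_trans_homeo_of_mem_productTriples {g g₁ g₂ : GS}
    (h : (g, g₁, g₂) ∈ productTriples) : (homeo g₂).trans (homeo g₁) = homeo g :=
  Homeomorph.ext <| act_act_eq_act_of_closed (fun g g₁ g₂ => (g, g₁, g₂) ∈ productTriples)
    (by decide) (by decide) h

theorem homeo_trans_self (g : GS) : (homeo g).trans (homeo g) = Homeomorph.refl Δ :=
  Homeomorph.ext (act_act g)

theorem homeo_ne_refl_of_act_ne {g : GS} (w : Δ) (n : ℕ) (h : act g w n ≠ w n) :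
    homeo g ≠ Homeomorph.refl Δ :=
  fun he => h (congrFun (DFunLike.congr_fun he w) n)

end GS

theorem liftC1_trans (f g : Δ ≃ₜ Δ) : (liftC1 f).trans (liftC1 g) = liftC1 (f.trans g) := rfl

theorem liftC1_refl : liftC1 (Homeomorph.refl Δ) = Homeomorph.refl (C 1) := rfl

theorem liftC1_injective : Function.Injective liftC1 := fun _ _ h =>
  Homeomorph.ext fun w => congrArg Prod.snd (DFunLike.congr_fun h (0, w))

theorem liftC1_ne_refl {f : Δ ≃ₜ Δ} (hf : f ≠ Homeomorph.refl Δ) :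
    liftC1 f ≠ Homeomorph.refl (C 1) :=
  liftC1_refl ▸ liftC1_injective.ne hf

theorem liftC1_homeo_trans_homeo {g g₁ g₂ : GS} (h : (g, g₁, g₂) ∈ GS.productTriples) :
    (liftC1 (GS.homeo g₂)).trans (liftC1 (GS.homeo g₁)) = liftC1 (GS.homeo g) := by
  rw [liftC1_trans, GS.homeo_trans_homeo_of_mem_productTriples h]

theorem liftC1_homeo_trans_self (g : GS) :
    (liftC1 (GS.homeo g)).trans (liftC1 (GS.homeo g)) = Homeomorph.refl (C 1) := by
  rw [liftC1_trans, GS.homeo_trans_self, liftC1_refl]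

theorem gc_trans_gb : gc.trans gb = gd := liftC1_homeo_trans_homeo (by decide)

theorem gb_trans_gc : gb.trans gc = gd := liftC1_homeo_trans_homeo (by decide)

theorem gd_trans_gc : gd.trans gc = gb := liftC1_homeo_trans_homeo (by decide)

theorem gc_trans_gd : gc.trans gd = gb := liftC1_homeo_trans_homeo (by decide)

theorem gb_trans_gd : gb.trans gd = gc := liftC1_homeo_trans_homeo (by decide)

theorem gd_trans_gb : gd.trans gb = gc := liftC1_homeo_trans_homeo (by decide)

theorem gb_trans_gb : gb.trans gb = Homeomorph.refl (C 1) := liftC1_homeo_trans_self .b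

theorem gc_trans_gc : gc.trans gc = Homeomorph.refl (C 1) := liftC1_homeo_trans_self .c

theorem gd_trans_gd : gd.trans gd = Homeomorph.refl (C 1) := liftC1_homeo_trans_self .d

/-- `b(000…) = 010…`. -/
theorem gb_ne_refl : gb ≠ Homeomorph.refl (C 1) :=
  liftC1_ne_refl (GS.homeo_ne_refl_of_act_ne (fun _ => false) 1 (by decide))

/-- `c(000…) = 010…`. -/
theorem gc_ne_refl : gc ≠ Homeomorph.refl (C 1) :=
  liftC1_ne_refl (GS.homeo_ne_refl_of_act_ne (fun _ => false) 1 (by decide))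

/-- `d(1000…) = 1010…`. -/
theorem gd_ne_refl : gd ≠ Homeomorph.refl (C 1) :=
  liftC1_ne_refl (GS.homeo_ne_refl_of_act_ne (fun n => n == 0) 2 (by decide))

theorem gb_ne_gc : gb ≠ gc := fun h => gd_ne_refl (by rw [← gb_trans_gc, h, gc_trans_gc])

theorem gb_ne_gd : gb ≠ gd := fun h => gc_ne_refl (by rw [← gb_trans_gd, h, gd_trans_gd])

theorem gc_ne_gd : gc ≠ gd := fun h => gb_ne_refl (by rw [← gc_trans_gd, h, gd_trans_gd])

theorem mul_eq_trans {n : ℕ} (f g : C n ≃ₜ C n) : f * g = g.trans f := rfl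

theorem refl_eq_one (n : ℕ) : Homeomorph.refl (C n) = 1 := rfl

theorem mul_self_of_mem_Kset {a : C 1 ≃ₜ C 1} (ha : a ∈ Kset) : a * a = 1 := by
  rcases ha with rfl | rfl | rfl | rfl
  exacts [mul_one _, gb_trans_gb, gc_trans_gc, gd_trans_gd]

theorem mul_mem_Kset {a b : C 1 ≃ₜ C 1} (ha : a ∈ Kset) (hb : b ∈ Kset) : a * b ∈ Kset := by
  rcases ha with rfl | rfl | rfl | rfl <;> rcases hb with rfl | rfl | rfl | rfl <;>
    simp [Kset, refl_eq_one, mul_eq_trans, gc_trans_gb, gb_trans_gc, gd_trans_gc, gc_trans_gd,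
      gb_trans_gd, gd_trans_gb, gb_trans_gb, gc_trans_gc, gd_trans_gd]

theorem ncard_Kset : Kset.ncard = 4 := by
  rw [Kset, Set.ncard_insert_of_notMem, Set.ncard_insert_of_notMem, Set.ncard_pair gc_ne_gd]
  · simp [gb_ne_gc, gb_ne_gd]
  · simp [gb_ne_refl.symm, gc_ne_refl.symm, gd_ne_refl.symm]

theorem kset_klein_four :
    (gc.trans gb = gd ∧ gb.trans gc = gd ∧ gd.trans gc = gb ∧ gc.trans gd = gb ∧
      gb.trans gd = gc ∧ gd.trans gb = gc) ∧
    (gb.trans gb = Homeomorph.refl (C 1) ∧ gc.trans gc = Homeomorph.refl (C 1) ∧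
      gd.trans gd = Homeomorph.refl (C 1)) ∧
    (gb ≠ gc ∧ gb ≠ gd ∧ gc ≠ gd) ∧
    (gb ≠ Homeomorph.refl (C 1) ∧ gc ≠ Homeomorph.refl (C 1) ∧
      gd ≠ Homeomorph.refl (C 1)) ∧
    (∃ H : Subgroup (C 1 ≃ₜ C 1), (H : Set (C 1 ≃ₜ C 1)) = Kset ∧ IsKleinFour H) :=
  ⟨⟨gc_trans_gb, gb_trans_gc, gd_trans_gc, gc_trans_gd, gb_trans_gd, gd_trans_gb⟩,
    ⟨gb_trans_gb, gc_trans_gc, gd_trans_gd⟩, ⟨gb_ne_gc, gb_ne_gd, gc_ne_gd⟩,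
    ⟨gb_ne_refl, gc_ne_refl, gd_ne_refl⟩,
    Subgroup.exists_coe_eq_isKleinFour_of_mul_self (Or.inl rfl) mul_mem_Kset mul_self_of_mem_Kset
      ncard_Kset⟩
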